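/- For the FBSDE symmetry group with terminal condition Y_T = H(X_T): given C¹ functions γ, ξ : [0,T] × ℝ × ℝ → ℝ generating flows φ (on y) and ϕ (on x), the transformed terminal condition φ(T, x, H(x), a) = H(ϕ(T, x, H(x), a)) holds for all a near 0 and all x if and only if γ(T, x, H(x)) = H'(x) ξ(T, x, H(x)) for all x. -/

import Mathlib

/-!
Differentiating `φ(a) = H(ϕ(a))` at `a = 0` gives the tangency condition `γ = H' ξ`.
Conversely, if `(ξ, γ)` is tangent to the graph of `H`, lift a solution of the scalar ODE
`x' = ξ(T, x, H x)` to the graph: this is an integral curve of `(ξ, γ)` through `(x, H x)` lying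
in the graph, and by uniqueness for the `C¹` field `(ξ, γ)` it agrees near `a = 0` with the
flow `(ϕ, φ)`.
-/

open Set Filter Topology

theorem eq_deriv_mul_of_eventuallyEq_comp {H u v : ℝ → ℝ} {a₀ ξ₀ γ₀ : ℝ}
    (hH : DifferentiableAt ℝ H (u a₀)) (hu : HasDerivAt u ξ₀ a₀) (hv : HasDerivAt v γ₀ a₀)
    (hvu : v =ᶠ[𝓝 a₀] H ∘ u) : γ₀ = deriv H (u a₀) * ξ₀ :=
  hv.unique ((hH.hasDerivAt.comp a₀ hu).congr_of_eventuallyEq hvu)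

theorem exists_eventually_hasDerivAt_graph {H : ℝ → ℝ} {V : ℝ × ℝ → ℝ × ℝ} {x : ℝ}
    (hH : Differentiable ℝ H) (hV : ContDiffAt ℝ 1 (fun z => (V (z, H z)).1) x)
    (htan : ∀ z, (V (z, H z)).2 = deriv H z * (V (z, H z)).1) :
    ∃ f : ℝ → ℝ, f 0 = x ∧
      ∀ᶠ a in 𝓝 0, HasDerivAt (fun a => (f a, H (f a))) (V (f a, H (f a))) a := by
  obtain ⟨f, hf₀, ε, hε, hf⟩ := hV.exists_forall_mem_closedBall_exists_eq_forall_mem_Ioo_hasDerivAt₀ 0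
  refine ⟨f, hf₀, ?_⟩
  filter_upwards [Ioo_mem_nhds (by linarith : 0 - ε < 0) (by linarith : 0 < 0 + ε)] with a ha
  have hHf := (hH (f a)).hasDerivAt.comp a (hf a ha)
  rw [← htan] at hHf
  exact (hf a ha).prodMk hHf

theorem ODE_solution_unique_of_contDiffAt {E : Type*} [NormedAddCommGroup E] [NormedSpace ℝ E]
    {V : E → E} {p : E} {u w : ℝ → E} {t₀ : ℝ} (hV : ContDiffAt ℝ 1 V p)
    (hu : ∀ᶠ t in 𝓝 t₀, HasDerivAt u (V (u t)) t) (hw : ∀ᶠ t in 𝓝 t₀, HasDerivAt w (V (w t)) t)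
    (hu₀ : u t₀ = p) (hw₀ : w t₀ = p) : u =ᶠ[𝓝 t₀] w := by
  obtain ⟨K, s, hs, hK⟩ := hV.exists_lipschitzOnWith
  have eventually_mem : ∀ {c : ℝ → E}, (∀ᶠ t in 𝓝 t₀, HasDerivAt c (V (c t)) t) →
      c t₀ = p → ∀ᶠ t in 𝓝 t₀, c t ∈ s := fun hc hc₀ =>
    hc.self_of_nhds.continuousAt.preimage_mem_nhds (hc₀ ▸ hs)
  exact ODE_solution_unique_of_eventually (v := fun _ => V) (s := fun _ => s)
    (.of_forall fun _ => hK) (hu.and (eventually_mem hu hu₀)) (hw.and (eventually_mem hw hw₀))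
    (hu₀.trans hw₀.symm)

/-- for the FBSDE symmetry group with terminal condition `Y_T = H(X_T)`: given
`C¹` functions `γ, ξ` generating the flows `φ` (on `y`) and `ϕ` (on `x`), the transformed
terminal condition `φ(T, x, H x, a) = H (ϕ(T, x, H x, a))` holds for all `a` near `0` and all
`x` iff `γ(T, x, H x) = H'(x) ξ(T, x, H x)` for all `x`. -/
theorem stmt14 (T : ℝ) (H : ℝ → ℝ) (hH : ContDiff ℝ 1 H)
    (γ ξ : ℝ → ℝ → ℝ → ℝ)
    (hγ : ContDiff ℝ 1 fun p : ℝ × ℝ × ℝ => γ p.1 p.2.1 p.2.2)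
    (hξ : ContDiff ℝ 1 fun p : ℝ × ℝ × ℝ => ξ p.1 p.2.1 p.2.2)
    (φ ϕ : ℝ → ℝ → ℝ → ℝ → ℝ)
    (hφ : ∀ t x y a, HasDerivAt (fun a' => φ t x y a') (γ t (ϕ t x y a) (φ t x y a)) a)
    (hϕ : ∀ t x y a, HasDerivAt (fun a' => ϕ t x y a') (ξ t (ϕ t x y a) (φ t x y a)) a)
    (hφ0 : ∀ t x y, φ t x y 0 = y) (hϕ0 : ∀ t x y, ϕ t x y 0 = x) :
    (∀ x : ℝ, ∀ᶠ a in nhds (0:ℝ), φ T x (H x) a = H (ϕ T x (H x) a)) ↔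
      ∀ x : ℝ, γ T x (H x) = deriv H x * ξ T x (H x) := by
  have hHd : Differentiable ℝ H := hH.differentiable one_ne_zero
  constructor
  · intro hinv x
    have := eq_deriv_mul_of_eventuallyEq_comp (hHd _) (hϕ T x (H x) 0) (hφ T x (H x) 0) (hinv x)
    simpa only [hϕ0, hφ0] using this
  · intro htan x
    set V : ℝ × ℝ → ℝ × ℝ := fun p => (ξ T p.1 p.2, γ T p.1 p.2)
    have hV : ContDiff ℝ 1 V :=
      (hξ.comp (contDiff_const.prodMk contDiff_id)).prodMk
        (hγ.comp (contDiff_const.prodMk contDiff_id))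
    obtain ⟨f, hf₀, hf⟩ := exists_eventually_hasDerivAt_graph (V := V) hHd
      (hξ.comp (contDiff_const.prodMk (contDiff_id.prodMk hH))).contDiffAt htan
    have hflow : (fun a => (ϕ T x (H x) a, φ T x (H x) a)) =ᶠ[𝓝 0] fun a => (f a, H (f a)) :=
      ODE_solution_unique_of_contDiffAt hV.contDiffAt
        (.of_forall fun a => (hϕ T x (H x) a).prodMk (hφ T x (H x) a)) hf
        (by rw [hϕ0, hφ0]) (by rw [hf₀])
    filter_upwards [hflow] with a ha
    obtain ⟨hϕf, hφf⟩ := Prod.mk.inj ha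
    rw [hϕf, hφf]
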